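/- Fix k ∈ ℕ, a finite set A₀ ⊆ ℕ, and functions g : Fin k → List ℕ → ℕ → List ℕ such that for each i : Fin k the function g i (from List ℕ × ℕ to List ℕ) is computable. Let B be the least subset of ℕ containing A₀ and closed under the operations, i.e. the intersection of all sets C ⊇ A₀ such that whenever every element of a list xs lies in C, then for every i : Fin k and every n ∈ ℕ every element of g i xs n lies in C. Then B is recursively enumerable: there exists a computable function e : ℕ → Option ℕ with B = {x | ∃ m, e m = some x}. -/

import Mathlib

/-!
Enumerate the generated set in stages. Stage `t + 1` appends to stage `t` the conclusions of the
rule instance coded by the second component of `Nat.unpair t`, provided its premises already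
occur in stage `t`. Since `s ≤ Nat.pair s c`, every instance is tried at arbitrarily late stages,
so the union of the stages is closed under the rules; conversely every stage lies in every closed
set. The stages form a computable sequence of lists (a primitive recursion over `t`), and their
union is enumerated by sending `Nat.pair t j` to the `j`-th entry of stage `t`.
-/

open Encodable

theorem Computable.uncurry_fin {α σ : Type*} [Primcodable α] [Primcodable σ] {k : ℕ}
    {f : Fin k → α → σ} (hf : ∀ i, Computable (f i)) :
    Computable fun q : Fin k × α => f q.1 q.2 :=
  (Computable.vector_get.comp ((Computable.vector_ofFn hf).comp Computable.snd)
    Computable.fst).of_eq fun q => by simp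

theorem PrimrecRel.list_subset {α : Type*} [Primcodable α] :
    PrimrecRel fun xs l : List α => xs ⊆ l := by
  have hmem : PrimrecRel fun (a : α) (l : List α) => a ∈ l :=
    ((PrimrecRel.exists_mem_list Primrec.eq).comp Primrec.snd Primrec.fst).of_eq
      fun p => by simp
  exact (PrimrecRel.forall_mem_list hmem).of_eq fun xs l => Iff.rfl

theorem exists_computable_enum_of_computable_lists {α : Type*} [Primcodable α]
    {L : ℕ → List α} (hL : Computable L) :
    ∃ e : ℕ → Option α, Computable e ∧
      {x | ∃ m, e m = some x} = {x | ∃ t, x ∈ L t} := by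
  refine ⟨fun m => (L m.unpair.1)[m.unpair.2]?, ?_, ?_⟩
  · exact Computable.list_getElem?.comp (hL.comp (Computable.fst.comp Computable.unpair))
      (Computable.snd.comp Computable.unpair)
  · ext x
    constructor
    · rintro ⟨m, hm⟩
      exact ⟨m.unpair.1, List.mem_of_getElem? hm⟩
    · rintro ⟨t, hx⟩
      obtain ⟨j, hj, rfl⟩ := List.getElem_of_mem hx
      exact ⟨Nat.pair t j, by simp [hj]⟩

variable {α β : Type*}

/-- Rule instance `b` derives every element of `concl b` from the elements of `prem b`. -/
def ruleClosure (A₀ : Set α) (prem concl : β → List α) : Set α :=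
  ⋂₀ {C | A₀ ⊆ C ∧ ∀ b, (∀ x ∈ prem b, x ∈ C) → ∀ y ∈ concl b, y ∈ C}

namespace ruleClosure

variable [Primcodable β] [DecidableEq α] (l₀ : List α) (prem concl : β → List α)

def fire (t : ℕ) (l : List α) : List α :=
  match decode (α := β) t.unpair.2 with
  | some b => if prem b ⊆ l then concl b else []
  | none => []

def stage : ℕ → List α
  | 0 => l₀
  | t + 1 => stage t ++ fire prem concl t (stage t)

variable {prem concl}

theorem computable_fire [Primcodable α] (hprem : Computable prem)
    (hconcl : Computable concl) : Computable₂ (fire prem concl) := by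
  have hsub : Computable fun q : (ℕ × List α) × β => decide (prem q.2 ⊆ q.1.2) :=
    PrimrecRel.list_subset.decide.to_comp.comp (hprem.comp Computable.snd)
      (Computable.snd.comp Computable.fst)
  have hif : Computable₂ fun (q : ℕ × List α) (b : β) =>
      if prem b ⊆ q.2 then concl b else [] :=
    (Computable.cond hsub (hconcl.comp Computable.snd) (Computable.const [])).of_eq
      fun q => by simp [Bool.cond_decide]
  refine (Computable.option_casesOn
    (Computable.decode.comp (Computable.snd.comp (Computable.unpair.comp Computable.fst)))
    (Computable.const []) hif).of_eq fun q => ?_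
  simp only [fire]
  cases decode (α := β) q.1.unpair.2 <;> rfl

theorem computable_stage [Primcodable α] (hprem : Computable prem)
    (hconcl : Computable concl) : Computable (stage l₀ prem concl) :=
  (Computable.nat_rec Computable.id (Computable.const l₀)
    (Computable.list_append.comp (Computable.snd.comp Computable.snd)
      ((computable_fire hprem hconcl).comp (Computable.fst.comp Computable.snd)
        (Computable.snd.comp Computable.snd))).to₂).of_eq fun t => by
    induction t with
    | zero => rfl
    | succ t ih => simp [stage, ← ih]

theorem stage_subset_stage {s t : ℕ} (h : s ≤ t) :
    stage l₀ prem concl s ⊆ stage l₀ prem concl t := by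
  induction t, h using Nat.le_induction with
  | base => exact List.Subset.refl _
  | succ t _ ih => exact List.Subset.trans ih (List.subset_append_left _ _)

theorem exists_stage_superset (xs : List α)
    (hxs : ∀ x ∈ xs, ∃ t, x ∈ stage l₀ prem concl t) :
    ∃ t, xs ⊆ stage l₀ prem concl t := by
  induction xs with
  | nil => exact ⟨0, List.nil_subset _⟩
  | cons x xs ih =>
    obtain ⟨s, hs⟩ := hxs x List.mem_cons_self
    obtain ⟨t, ht⟩ := ih fun y hy => hxs y (List.mem_cons_of_mem x hy)
    refine ⟨max s t, List.cons_subset.mpr ⟨?_, ?_⟩⟩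
    · exact stage_subset_stage l₀ (le_max_left s t) hs
    · exact List.Subset.trans ht (stage_subset_stage l₀ (le_max_right s t))

theorem concl_subset_stage {b : β} {s : ℕ} (h : prem b ⊆ stage l₀ prem concl s) :
    concl b ⊆ stage l₀ prem concl (Nat.pair s (encode b) + 1) := by
  have hprem : prem b ⊆ stage l₀ prem concl (Nat.pair s (encode b)) :=
    List.Subset.trans h (stage_subset_stage l₀ (Nat.left_le_pair s (encode b)))
  simp only [stage, fire, Nat.unpair_pair, encodek, if_pos hprem]
  exact List.subset_append_right _ _

theorem stage_subset_of_closed {C : Set α} (h₀ : {x | x ∈ l₀} ⊆ C)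
    (hC : ∀ b, (∀ x ∈ prem b, x ∈ C) → ∀ y ∈ concl b, y ∈ C) (t : ℕ) :
    ∀ x ∈ stage l₀ prem concl t, x ∈ C := by
  induction t with
  | zero => exact h₀
  | succ t ih =>
    simp only [stage, List.mem_append]
    rintro x (hx | hx)
    · exact ih x hx
    · unfold fire at hx
      split at hx
      · split_ifs at hx with hprem
        · exact hC _ (fun y hy => ih y (hprem hy)) x hx
        · simp at hx
      · simp at hx

theorem eq_setOf_mem_stage :
    ruleClosure {x | x ∈ l₀} prem concl = {x | ∃ t, x ∈ stage l₀ prem concl t} := by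
  apply Set.Subset.antisymm
  · refine Set.sInter_subset_of_mem ⟨fun x hx => ⟨0, hx⟩, fun b hb y hy => ?_⟩
    obtain ⟨s, hs⟩ := exists_stage_superset l₀ (prem b) hb
    exact ⟨_, concl_subset_stage l₀ hs hy⟩
  · rintro x ⟨t, hx⟩ C ⟨h₀, hC⟩
    exact stage_subset_of_closed l₀ h₀ hC t x hx

theorem exists_computable_enum [Primcodable α] (hprem : Computable prem)
    (hconcl : Computable concl) :
    ∃ e : ℕ → Option α, Computable e ∧
      ruleClosure {x | x ∈ l₀} prem concl = {x | ∃ m, e m = some x} := by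
  obtain ⟨e, he, hrange⟩ :=
    exists_computable_enum_of_computable_lists (computable_stage l₀ hprem hconcl)
  exact ⟨e, he, (eq_setOf_mem_stage l₀).trans hrange.symm⟩

end ruleClosure

/-- The universe of objects generated from a finite set of initial objects by finitely
many computable conditional stream schemas is recursively enumerable. -/
theorem generated_universe_re (k : ℕ) (A₀ : Finset ℕ)
    (g : Fin k → List ℕ → ℕ → List ℕ)
    (hg : ∀ i : Fin k, Computable (fun p : List ℕ × ℕ => g i p.1 p.2)) :
    ∃ e : ℕ → Option ℕ, Computable e ∧
      (⋂₀ {C : Set ℕ | ↑A₀ ⊆ C ∧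
          ∀ xs : List ℕ, (∀ x ∈ xs, x ∈ C) → ∀ i : Fin k, ∀ n : ℕ, ∀ y ∈ g i xs n, y ∈ C})
        = {x : ℕ | ∃ m : ℕ, e m = some x} := by
  -- a rule instance is a triple `(i, xs, n)` with premises `xs` and conclusions `g i xs n`
  obtain ⟨e, he, heq⟩ := ruleClosure.exists_computable_enum A₀.toList
    (Computable.fst.comp Computable.snd) (Computable.uncurry_fin hg)
  refine ⟨e, he, Eq.trans ?_ heq⟩
  simp only [ruleClosure, Finset.mem_toList, Finset.setOfPred_mem, Prod.forall]
  congr! 4 with C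
  exact ⟨fun h i xs n hxs y => h xs hxs i n y, fun h xs hxs i n y => h i xs n hxs y⟩
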